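/- For integers m̃₁,…,m̃_L and n with 0 ≤ m̃_j ≤ m for all j and ∑_j m̃_j = n, and for a > 0, we have ∑_{j=1}^L [ -log(1 - m̃_j·a/(1+ma)) - m̃_j·a/(1+ma) ] ≤ (n/(2m))·log(1 + (ma)²). -/

import Mathlib

/-!
The summand is `g(x) = -log (1 - x) - x` evaluated at `x = t * β / (1 + β)` with `t = m̃ⱼ / m ∈ [0, 1]`
and `β = m a`. Concavity of `log` gives `g (t x) ≤ t g x`, which bounds the sum by `(n / m) g (β / (1 + β))`,
and `g (β / (1 + β)) = log (1 + β) - β / (1 + β) ≤ log (1 + β²) / 2` because the difference vanishes at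
`β = 0` and has derivative `2 β² / ((1 + β²) (1 + β)²) ≥ 0`.
-/

open Real Set Finset

lemma neg_log_one_sub_mul_sub_mul_le {t x : ℝ} (ht₀ : 0 ≤ t) (ht₁ : t ≤ 1) (hx : x < 1) :
    -log (1 - t * x) - t * x ≤ t * (-log (1 - x) - x) := by
  have h := strictConcaveOn_log_Ioi.concaveOn.2 (mem_Ioi.2 (sub_pos.2 hx)) (mem_Ioi.2 one_pos)
    ht₀ (sub_nonneg.2 ht₁) (add_sub_cancel t 1)
  have hcomb : t * (1 - x) + (1 - t) * 1 = 1 - t * x := by ring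
  simp only [smul_eq_mul, log_one, mul_zero, add_zero, hcomb] at h
  linarith

lemma log_one_add_sub_div_one_add_le {b : ℝ} (hb : 0 ≤ b) :
    log (1 + b) - b / (1 + b) ≤ log (1 + b ^ 2) / 2 := by
  set f : ℝ → ℝ := fun x ↦ log (1 + x ^ 2) / 2 - log (1 + x) + x / (1 + x)
  have hderiv : ∀ x, -1 < x → HasDerivAt f (2 * x ^ 2 / ((1 + x ^ 2) * (1 + x) ^ 2)) x := by
    intro x hx
    have hx₁ : 1 + x ≠ 0 := by linarith
    have h₁ : HasDerivAt (fun x : ℝ ↦ 1 + x) 1 x := (hasDerivAt_id x).const_add 1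
    have h₂ : HasDerivAt (fun x : ℝ ↦ 1 + x ^ 2) (2 * x) x := by
      simpa using (hasDerivAt_pow 2 x).const_add 1
    refine ((((h₂.log (by positivity)).div_const 2).sub (h₁.log hx₁)).add
      ((hasDerivAt_id x).div h₁ hx₁)).congr_deriv ?_
    simp only [id]
    field_simp
    ring
  have hmono : MonotoneOn f (Ici 0) := by
    refine monotoneOn_of_hasDerivWithinAt_nonneg (convex_Ici 0)
      (f' := fun x ↦ 2 * x ^ 2 / ((1 + x ^ 2) * (1 + x) ^ 2))
      (fun x hx ↦ (hderiv x (by linarith [mem_Ici.1 hx])).continuousAt.continuousWithinAt)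
      (fun x hx ↦ ?_) (fun x _ ↦ by positivity)
    rw [interior_Ici] at hx
    exact (hderiv x (by linarith [mem_Ioi.1 hx])).hasDerivWithinAt
  have h := hmono self_mem_Ici (mem_Ici.2 hb) hb
  simp only [f, ne_eq, OfNat.ofNat_ne_zero, not_false_eq_true, zero_pow, add_zero, log_one,
    zero_div, sub_zero, div_one] at h
  linarith

lemma neg_log_one_sub_div_one_add_sub_le {β : ℝ} (hβ : 0 ≤ β) :
    -log (1 - β / (1 + β)) - β / (1 + β) ≤ log (1 + β ^ 2) / 2 := by
  have h₁ : 1 - β / (1 + β) = (1 + β)⁻¹ := by field_simp; ring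
  rw [h₁, log_inv, neg_neg]
  exact log_one_add_sub_div_one_add_le hβ

theorem stmt_11 (L m n : ℕ) (hm : 1 ≤ m) (mt : Fin L → ℕ)
    (hmt : ∀ j, mt j ≤ m) (hsum : ∑ j, mt j = n) (a : ℝ) (ha : 0 < a) :
    ∑ j, (-Real.log (1 - (mt j : ℝ) * a / (1 + m * a)) - (mt j : ℝ) * a / (1 + m * a))
      ≤ ((n : ℝ) / (2 * m)) * Real.log (1 + ((m : ℝ) * a) ^ 2) := by
  have hm₀ : (m : ℝ) ≠ 0 := by positivity
  have hβ : 0 ≤ (m : ℝ) * a := by positivity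
  have hx : (m : ℝ) * a / (1 + m * a) < 1 := (div_lt_one (by positivity)).2 (lt_one_add _)
  have hG := neg_log_one_sub_div_one_add_sub_le hβ
  set G := -log (1 - (m : ℝ) * a / (1 + m * a)) - (m : ℝ) * a / (1 + m * a)
  have hterm : ∀ j, -log (1 - (mt j : ℝ) * a / (1 + m * a)) - (mt j : ℝ) * a / (1 + m * a)
      ≤ (mt j / m : ℝ) * G := by
    intro j
    have ht₁ : (mt j / m : ℝ) ≤ 1 := (div_le_one (by positivity)).2 (by exact_mod_cast hmt j)
    have htx : (mt j / m : ℝ) * (m * a / (1 + m * a)) = mt j * a / (1 + m * a) := by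
      field_simp
    simpa only [htx] using neg_log_one_sub_mul_sub_mul_le (by positivity) ht₁ hx
  calc _ ≤ ∑ j, (mt j / m : ℝ) * G := sum_le_sum fun j _ ↦ hterm j
    _ = (n / m : ℝ) * G := by rw [← sum_mul, ← sum_div, ← hsum, Nat.cast_sum]
    _ ≤ (n / m : ℝ) * (log (1 + ((m : ℝ) * a) ^ 2) / 2) := by gcongr
    _ = _ := by ring
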